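/- Let N ≥ 2, n ≥ 2, and let χ⁽¹⁾,…,χ⁽ⁿ⁾ be the vanishing-order sequences of n nonzero partitions of N. If there exist k, k' with 2 ≤ k < k' ≤ N such that ∑_{i=1}^{n} χ⁽ⁱ⁾_k > (n−1)k and ∑_{i=1}^{n} χ⁽ⁱ⁾_{k'} ≤ (n−1)k', then n = 2. -/

import Mathlib

/-!
Fix `n ≥ 3` partitions with `p₁ ≥ 2`, so that `χ_m ≤ m - 1`. If `∑ χ_m > (n-1)m` at some
`m < N`, then at most one of the sequences can stall between `m` and `m + 1`: a stall
`χ_{m+1} = χ_m = c` forces the part `p_c ≥ 2`, hence `p₁, …, p_c ≥ 2` and `2c ≤ m + 1`,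
and two stalls would already bring the sum down to `(m + 1) + (n - 2)(m - 1) ≤ (n - 1)m`.
So the sum grows by at least `n - 1`, the strict inequality propagates from `k` to `k'`,
and the second condition at `k'` cannot hold.
-/

/-- `p` (with parts indexed from 1) is a partition of `N`: the parts are
nonincreasing, sum to `N`, and vanish beyond index `N`. -/
def IsPartitionOf (N : ℕ) (p : ℕ → ℕ) : Prop :=
  (∀ i, 1 ≤ i → p (i + 1) ≤ p i) ∧
  (∑ j ∈ Finset.Icc 1 N, p j = N) ∧
  (∀ i, N < i → p i = 0)

/-- The vanishing order at `k` of the partition `p`: the least positive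
integer `i` such that `p 1 + ⋯ + p i ≥ k`. -/
noncomputable def chiOf (p : ℕ → ℕ) (k : ℕ) : ℕ :=
  sInf {i | 1 ≤ i ∧ k ≤ ∑ j ∈ Finset.Icc 1 i, p j}

/-- `χ` is the vanishing-order sequence, on `{1,…,N}`, of the partition `p` of `N`. -/
def IsVanishingOrderSeq (N : ℕ) (p : ℕ → ℕ) (χ : ℕ → ℕ) : Prop :=
  IsPartitionOf N p ∧ ∀ k, 1 ≤ k → k ≤ N → χ k = chiOf p k

open Finset

section Family

variable {ι : Type*} [Fintype ι]

lemma sum_le_card_sub_one_mul_of_pair {c : ι → ℕ} {m : ℕ} {i₀ i₁ : ι} (hne : i₀ ≠ i₁)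
    (hι : 3 ≤ Fintype.card ι) (hc : ∀ i, c i ≤ m - 1)
    (h₀ : 2 * c i₀ ≤ m + 1) (h₁ : 2 * c i₁ ≤ m + 1) :
    ∑ i, c i ≤ (Fintype.card ι - 1) * m := by
  classical
  have hrest : ∑ i ∈ {i₀, i₁}ᶜ, c i ≤ (Fintype.card ι - 2) * (m - 1) := by
    calc ∑ i ∈ {i₀, i₁}ᶜ, c i ≤ #({i₀, i₁}ᶜ : Finset ι) • (m - 1) :=
          sum_le_card_nsmul _ _ _ fun i _ => hc i
      _ = (Fintype.card ι - 2) * (m - 1) := by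
          rw [card_compl, card_pair hne, smul_eq_mul]
  rw [← sum_compl_add_sum {i₀, i₁}, sum_pair hne]
  obtain ⟨a, ha⟩ : ∃ a, Fintype.card ι = a + 3 := ⟨_, (Nat.sub_add_cancel hι).symm⟩
  have hc₀ := hc i₀
  have hc₁ := hc i₁
  rw [ha, show a + 3 - 2 = a + 1 by omega] at hrest
  rw [ha, show a + 3 - 1 = a + 2 by omega]
  rcases m with _ | m
  · omega
  · rw [Nat.add_sub_cancel] at hrest
    linarith

lemma sum_add_card_sub_one_le {c d : ι → ℕ} (i₀ : ι) (hcd : ∀ i, c i ≤ d i)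
    (hlt : ∀ i ≠ i₀, c i < d i) :
    ∑ i, c i + (Fintype.card ι - 1) ≤ ∑ i, d i := by
  classical
  have hpoint : ∀ i, c i + 1 ≤ d i + if i = i₀ then 1 else 0 := by
    intro i
    split_ifs with hi
    · exact Nat.add_le_add_right (hcd i) 1
    · exact hlt i hi
  have hsum := sum_le_sum fun i (_ : i ∈ univ) => hpoint i
  rw [sum_add_distrib, sum_add_distrib, sum_ite_eq', if_pos (mem_univ _), sum_const,
    card_univ, smul_eq_mul, mul_one] at hsum
  have : 0 < Fintype.card ι := Fintype.card_pos_iff.2 ⟨i₀⟩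
  omega

lemma card_sub_one_mul_succ_lt_sum {c d : ι → ℕ} {m : ℕ} (hι : 3 ≤ Fintype.card ι)
    (hc : ∀ i, c i ≤ m - 1) (hcd : ∀ i, c i ≤ d i)
    (hstall : ∀ i, d i = c i → 2 * c i ≤ m + 1)
    (h : (Fintype.card ι - 1) * m < ∑ i, c i) :
    (Fintype.card ι - 1) * (m + 1) < ∑ i, d i := by
  by_cases htwo : ∃ i₀ i₁, i₀ ≠ i₁ ∧ d i₀ = c i₀ ∧ d i₁ = c i₁
  · obtain ⟨i₀, i₁, hne, hs₀, hs₁⟩ := htwo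
    exact absurd h (not_lt.2 <|
      sum_le_card_sub_one_mul_of_pair hne hι hc (hstall i₀ hs₀) (hstall i₁ hs₁))
  obtain ⟨i₀, hlt⟩ : ∃ i₀, ∀ i ≠ i₀, c i < d i := by
    by_cases hone : ∃ i₀, d i₀ = c i₀
    · obtain ⟨i₀, hs₀⟩ := hone
      exact ⟨i₀, fun i hi =>
        (hcd i).lt_of_ne fun hs => htwo ⟨i₀, i, Ne.symm hi, hs₀, hs.symm⟩⟩
    · have : Nonempty ι := Fintype.card_pos_iff.mp (by omega)
      exact ⟨Classical.arbitrary ι, fun i _ =>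
        (hcd i).lt_of_ne fun hs => hone ⟨i, hs.symm⟩⟩
  have hgrowth := sum_add_card_sub_one_le i₀ hcd hlt
  linarith

end Family

lemma chiOf_le {p : ℕ → ℕ} {k i : ℕ} (hi : 1 ≤ i) (hk : k ≤ ∑ j ∈ Icc 1 i, p j) :
    chiOf p k ≤ i :=
  Nat.sInf_le ⟨hi, hk⟩

lemma sum_Icc_lt_of_lt_chiOf {p : ℕ → ℕ} {k i : ℕ} (hi : 1 ≤ i) (h : i < chiOf p k) :
    ∑ j ∈ Icc 1 i, p j < k := by
  by_contra! hk
  exact (chiOf_le hi hk).not_gt h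

namespace IsPartitionOf

variable {N : ℕ} {p : ℕ → ℕ}

lemma antitoneOn (hp : IsPartitionOf N p) : AntitoneOn p (Set.Ici 1) :=
  antitoneOn_nat_Ici_of_succ_le hp.1

lemma sum_Icc_eq_of_eq_zero (hp : IsPartitionOf N p) {i j : ℕ} (hj : 1 ≤ j) (hji : j ≤ i)
    (hiN : i ≤ N) (h0 : p j = 0) : ∑ x ∈ Icc 1 i, p x = N := by
  rw [← hp.2.1]
  refine sum_subset (Icc_subset_Icc le_rfl hiN) fun x hx hxi => ?_
  simp only [mem_Icc, not_and, not_le] at hx hxi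
  exact Nat.eq_zero_of_le_zero (h0 ▸ hp.antitoneOn (Set.mem_Ici.2 hj)
    (Set.mem_Ici.2 hx.1) (by omega))

lemma lt_sum_Icc (hp : IsPartitionOf N p) (h2 : 2 ≤ p 1) {i : ℕ} (hi : 1 ≤ i) (hiN : i < N) :
    i < ∑ x ∈ Icc 1 i, p x := by
  induction i, hi using Nat.le_induction with
  | base => simpa [Nat.lt_iff_add_one_le] using h2
  | succ i hi ih =>
    rcases Nat.eq_zero_or_pos (p (i + 1)) with h0 | hpos
    · rw [hp.sum_Icc_eq_of_eq_zero (by omega) le_rfl hiN.le h0]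
      exact hiN
    · rw [sum_Icc_succ_top (by omega)]
      have := ih (by omega)
      omega

lemma chiOf_spec (hp : IsPartitionOf N p) {k : ℕ} (hk : 1 ≤ k) (hkN : k ≤ N) :
    1 ≤ chiOf p k ∧ k ≤ ∑ j ∈ Icc 1 (chiOf p k), p j :=
  Nat.sInf_mem (s := {i | 1 ≤ i ∧ k ≤ ∑ j ∈ Icc 1 i, p j})
    ⟨N, hk.trans hkN, hp.2.1.symm ▸ hkN⟩

lemma chiOf_mono (hp : IsPartitionOf N p) {k k' : ℕ} (hkk' : k ≤ k') (hk' : 1 ≤ k')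
    (hk'N : k' ≤ N) : chiOf p k ≤ chiOf p k' :=
  have hspec := hp.chiOf_spec hk' hk'N
  chiOf_le hspec.1 (hkk'.trans hspec.2)

lemma chiOf_le_sub_one (hp : IsPartitionOf N p) (h2 : 2 ≤ p 1) {k : ℕ} (hk : 2 ≤ k)
    (hkN : k ≤ N) : chiOf p k ≤ k - 1 :=
  have hsum := hp.lt_sum_Icc h2 (i := k - 1) (by omega) (by omega)
  chiOf_le (by omega) (by omega)

lemma two_mul_chiOf_le_of_chiOf_succ_eq (hp : IsPartitionOf N p) {k : ℕ} (hk : 1 ≤ k)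
    (hkN : k + 1 ≤ N) (hstall : chiOf p (k + 1) = chiOf p k) : 2 * chiOf p k ≤ k + 1 := by
  set c := chiOf p k
  obtain ⟨hc1, hcS⟩ := hp.chiOf_spec (k := k + 1) (by omega) hkN
  rw [hstall] at hc1 hcS
  obtain hc | hc2 := hc1.eq_or_lt
  · omega
  have hbefore : ∑ j ∈ Icc 1 (c - 1), p j < k := sum_Icc_lt_of_lt_chiOf (by omega) (by omega)
  rw [← Nat.sub_add_cancel hc1, sum_Icc_succ_top (by omega), Nat.sub_add_cancel hc1] at hcS
  have hparts : ∀ j ∈ Icc 1 (c - 1), 2 ≤ p j := fun j hj => by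
    rw [mem_Icc] at hj
    exact (show 2 ≤ p c by omega).trans <|
      hp.antitoneOn (Set.mem_Ici.2 hj.1) (Set.mem_Ici.2 hc1) (by omega)
  have hlower : #(Icc 1 (c - 1)) • 2 ≤ ∑ j ∈ Icc 1 (c - 1), p j :=
    card_nsmul_le_sum _ _ _ hparts
  rw [Nat.card_Icc, smul_eq_mul] at hlower
  omega

end IsPartitionOf

namespace IsVanishingOrderSeq

variable {N : ℕ} {p χ : ℕ → ℕ}

lemma le_sub_one (hχ : IsVanishingOrderSeq N p χ) (h2 : 2 ≤ p 1) {k : ℕ} (hk : 2 ≤ k)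
    (hkN : k ≤ N) : χ k ≤ k - 1 := by
  rw [hχ.2 k (by omega) hkN]
  exact hχ.1.chiOf_le_sub_one h2 hk hkN

lemma le_succ (hχ : IsVanishingOrderSeq N p χ) {k : ℕ} (hk : 1 ≤ k) (hkN : k + 1 ≤ N) :
    χ k ≤ χ (k + 1) := by
  rw [hχ.2 k hk (by omega), hχ.2 (k + 1) (by omega) hkN]
  exact hχ.1.chiOf_mono k.le_succ (by omega) hkN

lemma two_mul_le_of_succ_eq (hχ : IsVanishingOrderSeq N p χ) {k : ℕ} (hk : 1 ≤ k)
    (hkN : k + 1 ≤ N) (hstall : χ (k + 1) = χ k) : 2 * χ k ≤ k + 1 := by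
  rw [hχ.2 k hk (by omega), hχ.2 (k + 1) (by omega) hkN] at hstall
  rw [hχ.2 k hk (by omega)]
  exact hχ.1.two_mul_chiOf_le_of_chiOf_succ_eq hk hkN hstall

end IsVanishingOrderSeq

theorem late_center_parameter_forces_two_punctures_general
    (N n : ℕ) (hn : 2 ≤ n)
    (p χ : Fin n → ℕ → ℕ)
    (h : ∀ i, IsVanishingOrderSeq N (p i) (χ i) ∧ 2 ≤ p i 1)
    (hex : ∃ k k', 2 ≤ k ∧ k < k' ∧ k' ≤ N ∧
      (n - 1) * k < (∑ i, χ i k) ∧ (∑ i, χ i k') ≤ (n - 1) * k') :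
    n = 2 := by
  obtain ⟨k, k', hk, hkk', hk'N, hlt, hle⟩ := hex
  by_contra hn2
  have hcard : 3 ≤ Fintype.card (Fin n) := by rw [Fintype.card_fin]; omega
  have propagate : ∀ m, k ≤ m → m ≤ k' → (n - 1) * m < ∑ i, χ i m := by
    intro m hkm
    induction m, hkm using Nat.le_induction with
    | base => exact fun _ => hlt
    | succ m hkm ih =>
      intro hmk'
      simpa only [Fintype.card_fin] using card_sub_one_mul_succ_lt_sum hcard
        (fun i => (h i).1.le_sub_one (h i).2 (hk.trans hkm) (by omega))
        (fun i => (h i).1.le_succ (by omega) (by omega))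
        (fun i => (h i).1.two_mul_le_of_succ_eq (by omega) (by omega))
        (by simpa only [Fintype.card_fin] using ih (by omega))
  exact (propagate k' hkk'.le le_rfl).not_ge hle

/-- if the center-parameter condition fails at some `k` but holds at some
larger `k'`, then necessarily `n = 2`. -/
theorem late_center_parameter_forces_two_punctures
    (N n : ℕ) (hN : 2 ≤ N) (hn : 2 ≤ n)
    (p χ : Fin n → ℕ → ℕ)
    (h : ∀ i, IsVanishingOrderSeq N (p i) (χ i) ∧ 2 ≤ p i 1)
    (hex : ∃ k k', 2 ≤ k ∧ k < k' ∧ k' ≤ N ∧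
      (n - 1) * k < (∑ i, χ i k) ∧ (∑ i, χ i k') ≤ (n - 1) * k') :
    n = 2 :=
  late_center_parameter_forces_two_punctures_general N n hn p χ h hex
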